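/- arXiv:2404.02327 — 4 statements merged into one kernel-verified Lean document; each statement's English description precedes it below -/
import Mathlib

section
/- Let {v_k}, {a_k}, {p_k} be nonnegative real sequences and {q_k} a nonnegative real sequence such that ∑ a_k < ∞, ∑ q_k = ∞, ∑ p_k < ∞, and v_{k+1} ≤ (1 + a_k − q_k)·v_k + p_k for all k. Then ∑_k q_k·v_k < ∞ and v_k → 0. -/
open Filter Finset

/-- Deterministic stochastic-approximation lemma: if nonnegative sequences satisfy
`v (k+1) ≤ (1 + a k - q k) * v k + p k` with `∑ a < ∞`, `∑ q = ∞`, `∑ p < ∞`, then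
`∑ q k * v k < ∞` and `v k → 0`. -/
theorem stmt_5 (v a p q : ℕ → ℝ)
    (hv : ∀ k, 0 ≤ v k) (ha : ∀ k, 0 ≤ a k) (hp : ∀ k, 0 ≤ p k) (hq : ∀ k, 0 ≤ q k)
    (hsa : Summable a) (hsq : ¬ Summable q) (hsp : Summable p)
    (hrec : ∀ k, v (k + 1) ≤ (1 + a k - q k) * v k + p k) :
    Summable (fun k => q k * v k) ∧ Tendsto v atTop (nhds 0) := by
  have hrec' : ∀ k, v (k+1) ≤ (1 + a k) * v k + p k := by
    intro k
    have := hrec k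
    nlinarith [mul_nonneg (hq k) (hv k)]
  set M : ℝ := Real.exp (∑' k, a k) * (v 0 + ∑' k, p k) with hMdef
  have hB1 : ∀ k, (1:ℝ) ≤ ∏ j ∈ range k, (1 + a j) := by
    intro k
    induction k with
    | zero => simp
    | succ k ih =>
      rw [Finset.prod_range_succ]
      nlinarith [ha k]
  have hbound : ∀ k, v k ≤ M := by
    have key : ∀ k, v k ≤ (∏ j ∈ range k, (1 + a j)) * (v 0 + ∑ j ∈ range k, p j) := by
      intro k
      induction k with
      | zero => simp
      | succ k ih =>
        have h1 : v (k+1) ≤ (1 + a k) * ((∏ j ∈ range k, (1 + a j)) * (v 0 + ∑ j ∈ range k, p j)) + p k := by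
          refine le_trans (hrec' k) ?_
          have h2 : 0 ≤ 1 + a k := by linarith [ha k]
          nlinarith [ha k]
        rw [Finset.prod_range_succ, Finset.sum_range_succ]
        have hB := hB1 k
        have hC : 0 ≤ v 0 + ∑ j ∈ range k, p j := by
          have : 0 ≤ ∑ j ∈ range k, p j := Finset.sum_nonneg fun j _ => hp j
          linarith [hv 0]
        have hD : (1:ℝ) ≤ (1 + a k) * ∏ j ∈ range k, (1 + a j) := by
          nlinarith [ha k]
        have hpk : p k ≤ (1 + a k) * (∏ j ∈ range k, (1 + a j)) * p k :=
          le_mul_of_one_le_left (hp k) hD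
        nlinarith [ha k, hp k]
    intro k
    refine le_trans (key k) ?_
    have h1 : ∏ j ∈ range k, (1 + a j) ≤ Real.exp (∑' k, a k) := by
      calc ∏ j ∈ range k, (1 + a j) ≤ ∏ j ∈ range k, Real.exp (a j) :=
            Finset.prod_le_prod (fun j _ => by linarith [ha j]) (fun j _ => by linarith [Real.add_one_le_exp (a j)])
        _ = Real.exp (∑ j ∈ range k, a j) := (Real.exp_sum _ _).symm
        _ ≤ Real.exp (∑' k, a k) := Real.exp_le_exp.mpr (Summable.sum_le_tsum _ (fun j _ => ha j) hsa)
    have h2 : v 0 + ∑ j ∈ range k, p j ≤ v 0 + ∑' k, p k := by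
      have := Summable.sum_le_tsum (range k) (fun j _ => hp j) hsp
      linarith
    have hC : 0 ≤ v 0 + ∑ j ∈ range k, p j := by
      have : 0 ≤ ∑ j ∈ range k, p j := Finset.sum_nonneg fun j _ => hp j
      linarith [hv 0]
    exact mul_le_mul h1 h2 hC (Real.exp_pos _).le
  have hM0 : 0 ≤ M := le_trans (hv 0) (hbound 0)
  have hterm : ∀ k, q k * v k ≤ (v k - v (k+1)) + (a k * M + p k) := by
    intro k
    have h := hrec k
    have h2 := mul_le_mul_of_nonneg_left (hbound k) (ha k)
    nlinarith
  have hgnn : ∀ k, 0 ≤ a k * M + p k := fun k => add_nonneg (mul_nonneg (ha k) hM0) (hp k)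
  have hg : Summable (fun k => a k * M + p k) := Summable.add (hsa.mul_right M) hsp
  have hsum : Summable (fun k => q k * v k) := by
    apply summable_of_sum_range_le (c := v 0 + ∑' k, (a k * M + p k))
    · intro k; exact mul_nonneg (hq k) (hv k)
    · intro n
      calc ∑ k ∈ range n, q k * v k
          ≤ ∑ k ∈ range n, ((v k - v (k+1)) + (a k * M + p k)) :=
            Finset.sum_le_sum fun k _ => hterm k
        _ = (v 0 - v n) + ∑ k ∈ range n, (a k * M + p k) := by
            rw [Finset.sum_add_distrib, Finset.sum_range_sub']
        _ ≤ v 0 + ∑' k, (a k * M + p k) := by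
            have h1 := hv n
            have h2 := Summable.sum_le_tsum (range n) (fun k _ => hgnn k) hg
            linarith
  refine ⟨hsum, ?_⟩
  have hIco : ∀ n m, n ≤ m → v m ≤ v n + ∑ k ∈ Finset.Ico n m, (a k * M + p k) := by
    intro n m hnm
    induction m, hnm using Nat.le_induction with
    | base => simp
    | succ m hnm ih =>
      rw [Finset.sum_Ico_succ_top hnm]
      have h1 := hrec' m
      have h2 := mul_le_mul_of_nonneg_left (hbound m) (ha m)
      nlinarith
  rw [Metric.tendsto_atTop]
  intro ε hε
  have htail : Tendsto (fun i => ∑' k, (a (k + i) * M + p (k + i))) atTop (nhds 0) :=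
    tendsto_sum_nat_add (f := fun k => a k * M + p k)
  obtain ⟨N, hN⟩ := ((tendsto_order.1 htail).2 (ε/2) (by linarith)).exists
  -- find n ≥ N with v n < ε/2
  have hex : ∃ n, N ≤ n ∧ v n < ε / 2 := by
    by_contra hc
    push_neg at hc
    apply hsq
    rw [← summable_nat_add_iff N]
    have hle : ∀ n : ℕ, q (n + N) ≤ (2/ε) * (q (n + N) * v (n + N)) := by
      intro n
      have hvn : ε / 2 ≤ v (n + N) := hc (n + N) (Nat.le_add_left N n)
      have hqn := hq (n + N)
      have : q (n + N) * (ε/2) ≤ q (n + N) * v (n + N) :=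
        mul_le_mul_of_nonneg_left hvn hqn
      rw [div_mul_eq_mul_div, le_div_iff₀ (by linarith)] at *
      nlinarith
    exact Summable.of_nonneg_of_le (fun n => hq (n + N))
      hle (((summable_nat_add_iff N).2 hsum).mul_left (2/ε))
  obtain ⟨n, hNn, hvn⟩ := hex
  refine ⟨n, fun m hm => ?_⟩
  rw [Real.dist_eq, sub_zero, abs_of_nonneg (hv m)]
  have h1 := hIco n m hm
  have h2 : ∑ k ∈ Finset.Ico n m, (a k * M + p k) ≤ ∑' k, (a (k + N) * M + p (k + N)) := by
    calc ∑ k ∈ Finset.Ico n m, (a k * M + p k)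
        ≤ ∑ k ∈ Finset.Ico N m, (a k * M + p k) := by
          apply Finset.sum_le_sum_of_subset_of_nonneg
          · exact Finset.Ico_subset_Ico hNn le_rfl
          · intro k _ _; exact hgnn k
      _ = ∑ k ∈ range (m - N), (a (N + k) * M + p (N + k)) := Finset.sum_Ico_eq_sum_range _ _ _
      _ ≤ ∑' k, (a (k + N) * M + p (k + N)) := by
          have hs : Summable (fun k => a (k + N) * M + p (k + N)) :=
            (summable_nat_add_iff N).2 hg
          have := Summable.sum_le_tsum (range (m - N)) (fun k _ => hgnn (k + N)) hs
          simpa [add_comm] using this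
  linarith
end

section
/- Let {v_k}, {u_k}, {a_k}, {b_k} be nonnegative real sequences with ∑ a_k < ∞, ∑ b_k < ∞, and v_{k+1} ≤ (1 + a_k)·v_k − u_k + b_k for all k ≥ 0. Then ∑_k u_k < ∞ and v_k converges to a finite limit. -/
open Filter

/-- Deterministic Robbins–Siegmund lemma: if nonnegative sequences satisfy
`v (k+1) ≤ (1 + a k) * v k - u k + b k` with `∑ a < ∞` and `∑ b < ∞`, then
`∑ u < ∞` and `v` converges to a finite limit. -/
theorem stmt_6 (v u a b : ℕ → ℝ)
    (hv : ∀ k, 0 ≤ v k) (hu : ∀ k, 0 ≤ u k) (ha : ∀ k, 0 ≤ a k) (hb : ∀ k, 0 ≤ b k)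
    (hsa : Summable a) (hsb : Summable b)
    (hrec : ∀ k, v (k + 1) ≤ (1 + a k) * v k - u k + b k) :
    Summable u ∧ ∃ l : ℝ, Tendsto v atTop (nhds l) := by
  set P : ℕ → ℝ := fun k => ∏ j ∈ Finset.range k, (1 + a j) with hPdef
  have hP1 : ∀ k, 1 ≤ P k := by
    intro k
    induction k with
    | zero => simp [hPdef]
    | succ n ih =>
      have : P (n + 1) = P n * (1 + a n) := Finset.prod_range_succ _ n
      rw [this]
      nlinarith [ha n]
  have hPpos : ∀ k, 0 < P k := fun k => lt_of_lt_of_le one_pos (hP1 k)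
  have hPsucc : ∀ k, P (k + 1) = P k * (1 + a k) := fun k => Finset.prod_range_succ _ k
  set B := Real.exp (∑' j, a j) with hB
  have hPle : ∀ k, P k ≤ B := by
    intro k
    calc P k ≤ ∏ j ∈ Finset.range k, Real.exp (a j) :=
          Finset.prod_le_prod (fun j _ => by linarith [ha j])
            (fun j _ => by have := Real.add_one_le_exp (a j); linarith)
      _ = Real.exp (∑ j ∈ Finset.range k, a j) := (Real.exp_sum _ _).symm
      _ ≤ B := Real.exp_le_exp.2 (Summable.sum_le_tsum _ (fun j _ => ha j) hsa)
  set w : ℕ → ℝ := fun k => v k / P k with hwdef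
  have hwnn : ∀ k, 0 ≤ w k := fun k => div_nonneg (hv k) (hPpos k).le
  have hw : ∀ k, w (k + 1) ≤ w k - u k / P (k + 1) + b k / P (k + 1) := by
    intro k
    have hp : (0:ℝ) < P (k + 1) := hPpos (k + 1)
    have key : ((1 + a k) * v k - u k + b k) / P (k + 1)
        = v k / P k - u k / P (k + 1) + b k / P (k + 1) := by
      rw [hPsucc k]
      have h1 : P k ≠ 0 := (hPpos k).ne'
      have h2 : (1 + a k) ≠ 0 := by nlinarith [ha k]
      field_simp
    calc w (k + 1) = v (k + 1) / P (k + 1) := rfl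
      _ ≤ ((1 + a k) * v k - u k + b k) / P (k + 1) := by gcongr; exact hrec k
      _ = w k - u k / P (k + 1) + b k / P (k + 1) := key
  set c : ℕ → ℝ := fun k => u k / P (k + 1) with hcdef
  set d : ℕ → ℝ := fun k => b k / P (k + 1) with hddef
  have hcnn : ∀ k, 0 ≤ c k := fun k => div_nonneg (hu k) (hPpos _).le
  have hdnn : ∀ k, 0 ≤ d k := fun k => div_nonneg (hb k) (hPpos _).le
  have hdle : ∀ k, d k ≤ b k := fun k => div_le_self (hb k) (hP1 _)
  have hsd : Summable d := Summable.of_nonneg_of_le hdnn hdle hsb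
  set S : ℕ → ℝ := fun k => ∑ j ∈ Finset.range k, c j with hSdef
  set T : ℕ → ℝ := fun k => ∑ j ∈ Finset.range k, d j with hTdef
  have hSnn : ∀ k, 0 ≤ S k := fun k => Finset.sum_nonneg fun j _ => hcnn j
  have hTle : ∀ k, T k ≤ ∑' j, d j := fun k => Summable.sum_le_tsum _ (fun j _ => hdnn j) hsd
  set g : ℕ → ℝ := fun k => w k + S k - T k with hgdef
  have hganti : Antitone g := by
    apply antitone_nat_of_succ_le
    intro k
    have hS : S (k + 1) = S k + c k := Finset.sum_range_succ _ _
    have hT : T (k + 1) = T k + d k := Finset.sum_range_succ _ _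
    have := hw k
    simp only [hgdef, hS, hT]
    have hck : c k = u k / P (k + 1) := rfl
    have hdk : d k = b k / P (k + 1) := rfl
    linarith [this]
  have hglb : ∀ k, -(∑' j, d j) ≤ g k := by
    intro k
    have := hTle k
    have := hSnn k
    have := hwnn k
    simp only [hgdef]
    linarith
  -- Summability of c, hence of u
  have hSb : ∀ k, S k ≤ g 0 + ∑' j, d j := by
    intro k
    have h1 : g k ≤ g 0 := hganti (Nat.zero_le k)
    have := hTle k
    have := hwnn k
    have hS0 : S 0 = 0 := Finset.sum_range_zero _
    have hT0 : T 0 = 0 := Finset.sum_range_zero _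
    simp only [hgdef] at h1 ⊢
    linarith [hwnn 0]
  have hsc : Summable c := summable_of_sum_range_le hcnn hSb
  have hsu : Summable u := by
    refine Summable.of_nonneg_of_le hu (fun k => ?_) (hsc.mul_left B)
    have : u k = P (k + 1) * c k := by
      simp only [hcdef]
      rw [mul_div_cancel₀ _ (hPpos (k + 1)).ne']
    rw [this]
    exact mul_le_mul_of_nonneg_right (hPle _) (hcnn k)
  refine ⟨hsu, ?_⟩
  -- g converges (antitone, bounded below)
  have hgbdd : BddBelow (Set.range g) := ⟨-(∑' j, d j), fun x ⟨k, hk⟩ => hk ▸ hglb k⟩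
  have hgconv : Tendsto g atTop (nhds (⨅ k, g k)) := tendsto_atTop_ciInf hganti hgbdd
  have hSconv : Tendsto S atTop (nhds (∑' j, c j)) := hsc.hasSum.tendsto_sum_nat
  have hTconv : Tendsto T atTop (nhds (∑' j, d j)) := hsd.hasSum.tendsto_sum_nat
  have hwconv : Tendsto w atTop (nhds ((⨅ k, g k) - (∑' j, c j) + (∑' j, d j))) := by
    have : w = fun k => g k - S k + T k := by
      funext k; simp only [hgdef]; ring
    rw [this]
    exact ((hgconv.sub hSconv).add hTconv)
  -- P converges (monotone, bounded above)
  have hPmono : Monotone P := by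
    apply monotone_nat_of_le_succ
    intro k
    rw [hPsucc k]
    nlinarith [hPpos k, ha k]
  have hPbdd : BddAbove (Set.range P) := ⟨B, fun x ⟨k, hk⟩ => hk ▸ hPle k⟩
  have hPconv : Tendsto P atTop (nhds (⨆ k, P k)) := tendsto_atTop_ciSup hPmono hPbdd
  refine ⟨((⨅ k, g k) - (∑' j, c j) + (∑' j, d j)) * (⨆ k, P k), ?_⟩
  have hveq : v = fun k => w k * P k := by
    funext k
    simp only [hwdef]
    rw [div_mul_cancel₀ _ (hPpos k).ne']
  rw [hveq]
  exact hwconv.mul hPconv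
end

section
/- Suppose nonnegative reals satisfy the recursion v_{k+1} ≤ (1 − χ_k|ρ|)·v_k + (γ_k²/(χ_k|ρ|))·C² + χ_k²·σ_k² for k ≥ T, where χ_k ∈ (0, 1/|ρ|), ∑ χ_k = ∞, ∑ χ_k² σ_k² < ∞, ∑ γ_k²/χ_k < ∞ and C, |ρ| > 0. Then v_k → 0 and ∑_k χ_k v_k < ∞. -/
open Filter

/-- Consensus-error recursion: if for `k ≥ T`,
`v (k+1) ≤ (1 - χ k * |ρ|) * v k + (γ k ^2 / (χ k * |ρ|)) * C^2 + χ k ^2 * σ k ^2`,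
with `χ k ∈ (0, 1/|ρ|)`, `∑ χ = ∞`, `∑ χ²σ² < ∞`, `∑ γ²/χ < ∞`, `C, |ρ| > 0`, then
`v k → 0` and `∑ χ k * v k < ∞`. -/
theorem stmt_10 (v χ γ σ : ℕ → ℝ) (ρ C : ℝ) (T : ℕ)
    (hv : ∀ k, 0 ≤ v k) (hγ : ∀ k, 0 ≤ γ k) (hσ : ∀ k, 0 ≤ σ k)
    (hρ : 0 < |ρ|) (hC : 0 < C)
    (hχpos : ∀ k, 0 < χ k) (hχlt : ∀ k, χ k < 1 / |ρ|)
    (hχdiv : ¬ Summable χ)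
    (hχσ : Summable (fun k => χ k ^ 2 * σ k ^ 2))
    (hγχ : Summable (fun k => γ k ^ 2 / χ k))
    (hrec : ∀ k ≥ T, v (k + 1) ≤ (1 - χ k * |ρ|) * v k
        + (γ k ^ 2 / (χ k * |ρ|)) * C ^ 2 + χ k ^ 2 * σ k ^ 2) :
    Tendsto v atTop (nhds 0) ∧ Summable (fun k => χ k * v k) := by
  set e : ℕ → ℝ := fun k => (γ k ^ 2 / (χ k * |ρ|)) * C ^ 2 + χ k ^ 2 * σ k ^ 2 with he_def
  have henn : ∀ k, 0 ≤ e k := by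
    intro k
    have h1 : 0 ≤ γ k ^ 2 / (χ k * |ρ|) :=
      div_nonneg (sq_nonneg _) (le_of_lt (mul_pos (hχpos k) hρ))
    have h2 : 0 ≤ χ k ^ 2 * σ k ^ 2 := mul_nonneg (sq_nonneg _) (sq_nonneg _)
    positivity
  have he : Summable e := by
    have h1 : Summable (fun k => (γ k ^ 2 / χ k) * (C ^ 2 / |ρ|)) := hγχ.mul_right _
    refine Summable.add (h1.congr ?_) hχσ
    intro k
    field_simp
  -- key telescoping: for all n,
  -- v (T+n) + ∑_{i<n} |ρ| * (χ (T+i) * v (T+i)) ≤ v T + ∑_{i<n} e (T+i)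
  have key : ∀ n, v (T + n) + ∑ i ∈ Finset.range n, |ρ| * (χ (T + i) * v (T + i))
      ≤ v T + ∑ i ∈ Finset.range n, e (T + i) := by
    intro n
    induction n with
    | zero => simp
    | succ n ih =>
      rw [Finset.sum_range_succ, Finset.sum_range_succ]
      have hr := hrec (T + n) (Nat.le_add_right T n)
      have : v (T + n + 1) ≤ v (T + n) - |ρ| * (χ (T + n) * v (T + n)) + e (T + n) := by
        rw [he_def]
        nlinarith [hr]
      have heq : T + (n + 1) = T + n + 1 := by ring
      rw [heq]
      linarith
  have heT : Summable (fun i => e (T + i)) := by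
    have := (summable_nat_add_iff T).2 he
    exact this.congr (fun i => by rw [Nat.add_comm])
  -- summability of χ * v
  have hsum : Summable (fun k => χ k * v k) := by
    have hshift : Summable (fun i => χ (T + i) * v (T + i)) := by
      apply summable_of_sum_range_le
        (c := (v T + ∑' i, e (T + i)) / |ρ|)
      · intro k; exact mul_nonneg (le_of_lt (hχpos _)) (hv _)
      · intro n
        have h1 := key n
        have h2 : ∑ i ∈ Finset.range n, e (T + i) ≤ ∑' i, e (T + i) :=
          Summable.sum_le_tsum _ (fun i _ => henn _) heT
        have h3 : |ρ| * ∑ i ∈ Finset.range n, χ (T + i) * v (T + i)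
            ≤ v T + ∑' i, e (T + i) := by
          rw [Finset.mul_sum]
          have := hv (T + n)
          linarith
        rw [le_div_iff₀ hρ]
        linarith [h3]
    have hshift' : Summable (fun i => χ (i + T) * v (i + T)) :=
      hshift.congr (fun i => by rw [Nat.add_comm T i])
    exact (summable_nat_add_iff T).1 hshift'
  refine ⟨?_, hsum⟩
  -- monotone-up-to-summable-error bound: for m ≥ T, v (m+n) ≤ v m + ∑_{i<n} e (m+i)
  have bound : ∀ m, T ≤ m → ∀ n, v (m + n) ≤ v m + ∑ i ∈ Finset.range n, e (m + i) := by
    intro m hm n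
    induction n with
    | zero => simp
    | succ n ih =>
      rw [Finset.sum_range_succ]
      have hr := hrec (m + n) (le_trans hm (Nat.le_add_right m n))
      have hnn : 0 ≤ χ (m + n) * |ρ| * v (m + n) :=
        mul_nonneg (mul_nonneg (le_of_lt (hχpos _)) hρ.le) (hv _)
      have heq : m + (n + 1) = m + n + 1 := by ring
      rw [heq]
      simp only [he_def] at ih hr ⊢
      nlinarith [hr, hnn]
  -- tail sums of e tend to 0
  have htail : Tendsto (fun i => ∑' k, e (k + i)) atTop (nhds 0) :=
    tendsto_sum_nat_add e
  rw [Metric.tendsto_atTop]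
  intro ε hε
  have hε2 : 0 < ε / 2 := by linarith
  obtain ⟨N1, hN1⟩ := (Metric.tendsto_atTop.1 htail) (ε / 2) hε2
  set N := max N1 T with hN_def
  -- there exists m ≥ N with v m < ε/2
  have hex : ∃ m, N ≤ m ∧ v m < ε / 2 := by
    by_contra hcon
    push_neg at hcon
    apply hχdiv
    rw [← summable_nat_add_iff N]
    refine Summable.of_nonneg_of_le (f := fun k => (2 / ε) * (χ (k + N) * v (k + N)))
      (fun k => (hχpos _).le) ?_ ?_
    · intro k
      have hvk := hcon (k + N) (Nat.le_add_left N k)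
      have hχk := (hχpos (k + N)).le
      show χ (k + N) ≤ 2 / ε * (χ (k + N) * v (k + N))
      calc χ (k + N) = (2 / ε) * (χ (k + N) * (ε / 2)) := by field_simp
        _ ≤ (2 / ε) * (χ (k + N) * v (k + N)) := by
            apply mul_le_mul_of_nonneg_left _ (by positivity)
            exact mul_le_mul_of_nonneg_left hvk hχk
    · exact (((summable_nat_add_iff N).2 hsum)).mul_left _
  obtain ⟨m, hmN, hvm⟩ := hex
  refine ⟨m, fun n hn => ?_⟩
  have hmT : T ≤ m := le_trans (le_max_right N1 T) hmN
  have hb := bound m hmT (n - m)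
  rw [Nat.add_sub_cancel' hn] at hb
  have hsum_tail : ∑ i ∈ Finset.range (n - m), e (m + i) ≤ ∑' k, e (k + m) := by
    have hsm : Summable (fun k => e (k + m)) := (summable_nat_add_iff m).2 he
    have := Summable.sum_le_tsum (f := fun k => e (k + m)) (Finset.range (n - m)) (fun i _ => henn _) hsm
    calc ∑ i ∈ Finset.range (n - m), e (m + i)
        = ∑ i ∈ Finset.range (n - m), e (i + m) := by
          exact Finset.sum_congr rfl (fun i _ => by rw [Nat.add_comm])
      _ ≤ ∑' k, e (k + m) := this
  have htailm : ∑' k, e (k + m) < ε / 2 := by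
    have := hN1 m (le_trans (le_max_left N1 T) hmN)
    rw [Real.dist_eq, sub_zero] at this
    calc ∑' k, e (k + m) ≤ |∑' k, e (k + m)| := le_abs_self _
      _ < ε / 2 := this
  rw [Real.dist_eq, sub_zero, abs_of_nonneg (hv n)]
  linarith
end

section
/- Let L(·, λ) be convex and differentiable on a convex set X ⊆ ℝ^n for fixed λ, let ρ > 0, and let α = Π_X[x − ρ·∇_x L(x, λ)]. Suppose ‖∇_x L(u, λ) − ∇_x L(v, λ)‖ ≤ G‖u − v‖ on X for some G ≥ 0. Then L(x, λ) − L(α, λ) ≥ (1/ρ − G)·‖x − α‖². -/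
open Filter Topology

/-- Gradient inequality for a convex function on a convex set. -/
lemma convexOn_grad_ineq {n : ℕ} {X : Set (EuclideanSpace ℝ (Fin n))}
    {f : EuclideanSpace ℝ (Fin n) → ℝ} (hf : ConvexOn ℝ X f)
    {a b : EuclideanSpace ℝ (Fin n)} (ha : a ∈ X) (hb : b ∈ X)
    (hd : DifferentiableAt ℝ f a) :
    inner ℝ (gradient f a) (b - a) ≤ f b - f a := by
  set d : ℝ := inner ℝ (gradient f a) (b - a) with hdd
  have hgrad := hd.hasGradientAt
  have hfd : HasFDerivAt f (InnerProductSpace.toDual ℝ _ (gradient f a)) a :=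
    hgrad.hasFDerivAt
  -- g t = f (a + t • (b - a))
  set g : ℝ → ℝ := fun t => f (a + t • (b - a)) with hg
  have hline : HasDerivAt (fun t : ℝ => a + t • (b - a)) (b - a) 0 := by
    simpa using ((hasDerivAt_id (0:ℝ)).smul_const (b - a)).const_add a
  have hgd : HasDerivAt g d 0 := by
    have hfd' : HasFDerivAt f (InnerProductSpace.toDual ℝ _ (gradient f a))
        ((fun t : ℝ => a + t • (b - a)) 0) := by simpa using hfd
    have := hfd'.comp_hasDerivAt 0 hline
    rw [hdd, ← InnerProductSpace.toDual_apply_apply]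
    exact this
  -- slope bound on (0,1]
  have hslope : ∀ t : ℝ, t ∈ Set.Ioc (0:ℝ) 1 → (g t - g 0) / t ≤ f b - f a := by
    intro t ht
    obtain ⟨ht0, ht1⟩ := ht
    have hmem : a + t • (b - a) ∈ X := by
      have := hf.1 ha hb (by linarith : (0:ℝ) ≤ 1 - t) (le_of_lt ht0) (by ring)
      convert this using 1
      module
    have hfle : f (a + t • (b - a)) ≤ (1 - t) * f a + t * f b := by
      have := hf.2 ha hb (by linarith : (0:ℝ) ≤ 1 - t) (le_of_lt ht0) (by ring)
      calc f (a + t • (b - a)) = f ((1 - t) • a + t • b) := by congr 1; module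
        _ ≤ (1 - t) * f a + t * f b := this
    rw [div_le_iff₀ ht0]
    simp only [hg, zero_smul, add_zero]
    nlinarith [hfle]
  have htend : Tendsto (slope g 0) (𝓝[>] (0:ℝ)) (𝓝 d) := by
    have := hgd.hasDerivWithinAt (s := Set.Ioi (0:ℝ))
    have h2 := (hasDerivWithinAt_iff_tendsto_slope.mp this)
    exact h2.mono_left (nhdsWithin_mono _ (by intro t ht; exact ⟨ht, ne_of_gt ht⟩))
  refine le_of_tendsto htend ?_
  filter_upwards [Ioc_mem_nhdsGT_of_mem (by norm_num : (0:ℝ) ∈ Set.Ico (0:ℝ) 1)] with t ht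
  have h := hslope t ht
  rw [slope_def_field, sub_zero]
  exact h

/-- Descent property of the perturbed primal point: if `f = L(·, λ)` is convex and
differentiable with `G`-Lipschitz gradient on the convex set `X`, and
`α = Π_X[x - ρ • ∇f(x)]` (characterized as the closest point of `X`), then
`f x - f α ≥ (1/ρ - G) * ‖x - α‖²`. -/
theorem stmt_18 {n : ℕ} (X : Set (EuclideanSpace ℝ (Fin n)))
    (hconv : Convex ℝ X) (f : EuclideanSpace ℝ (Fin n) → ℝ)
    (hf : ConvexOn ℝ X f) (hdiff : ∀ u ∈ X, DifferentiableAt ℝ f u)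
    (G ρ : ℝ) (hG : 0 ≤ G) (hρ : 0 < ρ)
    (hlip : ∀ u ∈ X, ∀ v ∈ X, ‖gradient f u - gradient f v‖ ≤ G * ‖u - v‖)
    (x α : EuclideanSpace ℝ (Fin n)) (hx : x ∈ X) (hα : α ∈ X)
    (hproj : ∀ z ∈ X, ‖(x - ρ • gradient f x) - α‖ ≤ ‖(x - ρ • gradient f x) - z‖) :
    (1 / ρ - G) * ‖x - α‖ ^ 2 ≤ f x - f α := by
  set u := x - ρ • gradient f x with hu
  -- variational inequality
  haveI : Nonempty X := ⟨⟨α, hα⟩⟩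
  have hinf : ‖u - α‖ = ⨅ w : X, ‖u - w‖ := by
    refine le_antisymm (le_ciInf fun w => hproj w w.2) ?_
    exact ciInf_le ⟨0, fun r ⟨w, hw⟩ => hw ▸ norm_nonneg _⟩ (⟨α, hα⟩ : X)
  have hVI := (norm_eq_iInf_iff_real_inner_le_zero hconv hα).mp hinf x hx
  -- ⟪x - ρ∇f x - α, x - α⟫ ≤ 0
  have key : ‖x - α‖ ^ 2 ≤ ρ * inner ℝ (gradient f x) (x - α) := by
    have : inner ℝ (u - α) (x - α) ≤ (0:ℝ) := hVI
    have hexp : inner ℝ (u - α) (x - α)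
        = inner ℝ (x - α) (x - α) - ρ * inner ℝ (gradient f x) (x - α) := by
      rw [hu]
      have : x - ρ • gradient f x - α = (x - α) - ρ • gradient f x := by abel
      rw [this, inner_sub_left, real_inner_smul_left]
    rw [hexp] at this
    rw [← real_inner_self_eq_norm_sq]
    linarith
  have hgrad := convexOn_grad_ineq hf hα hx (hdiff α hα)
  -- inner ℝ (∇f α) (x - α) ≤ f x - f α
  have hsplit : (inner ℝ (gradient f x) (x - α) : ℝ)
      - inner ℝ (gradient f x - gradient f α) (x - α) = inner ℝ (gradient f α) (x - α) := by
    rw [inner_sub_left]; ring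
  have hcs : (inner ℝ (gradient f x - gradient f α) (x - α) : ℝ) ≤ G * ‖x - α‖ ^ 2 := by
    calc (inner ℝ (gradient f x - gradient f α) (x - α) : ℝ)
        ≤ ‖gradient f x - gradient f α‖ * ‖x - α‖ := real_inner_le_norm _ _
      _ ≤ G * ‖x - α‖ * ‖x - α‖ :=
          mul_le_mul_of_nonneg_right (hlip x hx α hα) (norm_nonneg _)
      _ = G * ‖x - α‖ ^ 2 := by ring
  have h1 : (1 / ρ) * ‖x - α‖ ^ 2 ≤ inner ℝ (gradient f x) (x - α) := by
    rw [div_mul_eq_mul_div, one_mul, div_le_iff₀ hρ]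
    linarith [key]
  linarith [hgrad, hcs, h1, hsplit]
end
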